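/- Let Δ ≥ 3, let xx' and yy' be the two edges of Q_Δ^+ containing a vertex of degree 1, and let i ∈ {1,…,Δ}. Then there exists a connected ordering e_1, e_2, …, e_m of the edges of Q_Δ^+ with e_1 = xx' such that the colouring obtained by assigning e_1 the colour i and then assigning each subsequent edge the smallest positive integer colour not already used on an incident edge is a proper edge colouring using only colours from {1,…,Δ}. -/

import Mathlib

attribute [local instance] Classical.propDecidable

namespace GreedyEdge

variable {V : Type*}

/-- Two edges (as unordered pairs of vertices) share an endpoint. -/
def Shares (e f : Sym2 V) : Prop := ∃ x, x ∈ e ∧ x ∈ f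

/-- One step of the greedy procedure: colour the edge `e` with the smallest
colour `≥ 1` not already used on an edge sharing an endpoint with `e`
(uncoloured edges carry the value `0`). -/
noncomputable def step (c : Sym2 V → ℕ) (e : Sym2 V) : Sym2 V → ℕ :=
  Function.update c e (sInf {k : ℕ | 1 ≤ k ∧ ∀ f : Sym2 V, Shares e f → c f ≠ k})

/-- The greedy edge colouring obtained from the partial colouring `c₀` by
processing the edges of `L` in order (`0` means uncoloured). -/
noncomputable def greedyExtend (c₀ : Sym2 V → ℕ) (L : List (Sym2 V)) : Sym2 V → ℕ :=
  L.foldl step c₀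

/-- The greedy edge colouring following the ordering `L` of the edges,
starting from the everywhere-uncoloured function. -/
noncomputable def greedy (L : List (Sym2 V)) : Sym2 V → ℕ :=
  greedyExtend (fun _ => 0) L

/-- `L` is a connected ordering of the edges of `G`: a linear ordering of the
edge set such that every edge except the first shares an endpoint with some
earlier edge. -/
def ConnOrder (G : SimpleGraph V) (L : List (Sym2 V)) : Prop :=
  L.Nodup ∧ (∀ e, e ∈ L ↔ e ∈ G.edgeSet) ∧
    ∀ i : Fin L.length, 0 < (i : ℕ) →
      ∃ j : Fin L.length, (j : ℕ) < (i : ℕ) ∧ Shares (L.get i) (L.get j)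

/-- `c` is a proper edge colouring of `G` using colours from `{1, …, k}`. -/
def IsProperEdgeCol (G : SimpleGraph V) (c : Sym2 V → ℕ) (k : ℕ) : Prop :=
  (∀ e ∈ G.edgeSet, 1 ≤ c e ∧ c e ≤ k) ∧
    ∀ e ∈ G.edgeSet, ∀ f ∈ G.edgeSet, e ≠ f → Shares e f → c e ≠ c f

/-- The chromatic index `χ'(G)`: the least `k` such that `G` has a proper edge
colouring with colours in `{1, …, k}`. -/
noncomputable def chromIndex (G : SimpleGraph V) : ℕ :=
  sInf {k | ∃ c : Sym2 V → ℕ, IsProperEdgeCol G c k}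

/-- The connected greedy chromatic index `χ'_c(G)`: the least number of colours
used by the greedy procedure following a connected ordering of the edges.
(Since the set of colours used by a greedy colouring is `{1, …, max}`, the
number of colours used is the maximum colour.) -/
noncomputable def connChromIndex (G : SimpleGraph V) : ℕ :=
  sInf {k | ∃ L : List (Sym2 V), ConnOrder G L ∧ ∀ e ∈ G.edgeSet, greedy L e ≤ k}

end GreedyEdge

namespace GreedyEdge

/-- The `n`-dimensional hypercube graph: vertices are elements of `{0,1}ⁿ`,
two vertices being adjacent iff they differ in exactly one coordinate. -/
def hypercube (n : ℕ) : SimpleGraph (Fin n → Bool) :=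
  SimpleGraph.fromRel (fun x y => ∃ i, x i ≠ y i ∧ ∀ j, j ≠ i → x j = y j)

/-- The graph `G⁺` obtained from `G` by deleting the edge `xy` and attaching
two new pendant vertices `x' = Sum.inr true` and `y' = Sum.inr false` to `x`
and `y` respectively. -/
def plusGraph {V : Type*} (G : SimpleGraph V) (x y : V) :
    SimpleGraph (V ⊕ Bool) :=
  SimpleGraph.fromRel (fun a b =>
    (∃ u w : V, a = Sum.inl u ∧ b = Sum.inl w ∧ G.Adj u w ∧ s(u, w) ≠ s(x, y)) ∨
    (a = Sum.inl x ∧ b = Sum.inr true) ∨ (a = Sum.inl y ∧ b = Sum.inr false))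

end GreedyEdge

/-!
Write `y = flipAt x d0` and choose a permutation `σ` of the directions with `σ d0 + 1 = i`.
Giving every edge in direction `j` the colour `σ j + 1`, the two pendant edges counting as
direction `d0`, yields a proper `Δ`-edge-colouring `c` of `Q_Δ⁺` in which every cube vertex sees
all colours.

Greedy colouring reproduces `c` as soon as every edge is preceded, at one of its endpoints, by
edges of all smaller colours. Fix a rank on the vertices such that every vertex other than `x` and
`x'` has a neighbour of smaller rank, and list the edges after `xx'` by (smallest rank of an
endpoint, colour). An edge whose endpoint of smallest rank is `u` is then preceded by all edges at
`u` of smaller colour, which gives the greedy property, and by the edge from `u` to a neighbour of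
smaller rank (or by `xx'` when `u = x`), which makes the ordering connected. The Hamming distance
to `x` is such a rank once `y`, whose only closer neighbour is across the deleted edge, is moved
behind a neighbour at distance two.
-/

namespace GreedyEdge

variable {V : Type*}

lemma Shares.symm {e f : Sym2 V} (h : Shares e f) : Shares f e :=
  let ⟨z, hze, hzf⟩ := h; ⟨z, hzf, hze⟩

lemma IsProperEdgeCol.congr {G : SimpleGraph V} {c c' : Sym2 V → ℕ} {k : ℕ}
    (hc : IsProperEdgeCol G c k) (h : ∀ e ∈ G.edgeSet, c' e = c e) : IsProperEdgeCol G c' k :=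
  ⟨fun e he => h e he ▸ hc.1 e he,
    fun e he f hf hne hsh => h e he ▸ h f hf ▸ hc.2 e he f hf hne hsh⟩

section Greedy

variable (c : Sym2 V → ℕ)

noncomputable def colourOn (P : List (Sym2 V)) (f : Sym2 V) : ℕ := if f ∈ P then c f else 0

lemma colourOn_of_mem {P : List (Sym2 V)} {f : Sym2 V} (hf : f ∈ P) : colourOn c P f = c f :=
  if_pos hf

lemma colourOn_singleton [DecidableEq (Sym2 V)] (e : Sym2 V) :
    colourOn c [e] = Function.update (fun _ => 0) e (c e) := by
  funext f
  by_cases hf : f = e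
  · subst hf; simp [colourOn]
  · simp [colourOn, hf]

def IsGreedyChoice (P : List (Sym2 V)) (e : Sym2 V) : Prop :=
  IsLeast {k | 1 ≤ k ∧ ∀ f ∈ P, Shares e f → c f ≠ k} (c e)

variable {c}

lemma step_colourOn {P : List (Sym2 V)} {e : Sym2 V} (h : IsGreedyChoice c P e) :
    step (colourOn c P) e = colourOn c (P ++ [e]) := by
  have hfree : {k | 1 ≤ k ∧ ∀ f, Shares e f → colourOn c P f ≠ k} =
      {k | 1 ≤ k ∧ ∀ f ∈ P, Shares e f → c f ≠ k} := by
    ext k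
    simp only [Set.mem_ofPred_eq, colourOn]
    refine and_congr_right fun hk => ⟨fun h f hf hsh => by simpa [hf] using h f hsh, ?_⟩
    intro h f hsh
    split_ifs with hf
    · exact h f hf hsh
    · omega
  funext f
  rw [step, hfree, h.csInf_eq]
  by_cases hfe : f = e
  · subst hfe; simp [colourOn]
  · simp [colourOn, hfe]

lemma greedyExtend_colourOn : ∀ (P T : List (Sym2 V)),
    (∀ l₁ e l₂, T = l₁ ++ e :: l₂ → IsGreedyChoice c (P ++ l₁) e) →
      greedyExtend (colourOn c P) T = colourOn c (P ++ T)
  | P, [], _ => by simp [greedyExtend]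
  | P, e :: T, h => by
    have hstep : step (colourOn c P) e = colourOn c (P ++ [e]) :=
      step_colourOn (by simpa using h [] e T rfl)
    have hrest := greedyExtend_colourOn (P ++ [e]) T fun l₁ f l₂ hT => by
      simpa using h (e :: l₁) f l₂ (by simp [hT])
    simpa [greedyExtend, hstep] using hrest

end Greedy

lemma connOrder_of_forall_append_cons {G : SimpleGraph V} {L : List (Sym2 V)} (hnd : L.Nodup)
    (hmem : ∀ e, e ∈ L ↔ e ∈ G.edgeSet)
    (hconn : ∀ l₁ e l₂, L = l₁ ++ e :: l₂ → l₁ ≠ [] → ∃ f ∈ l₁, Shares e f) :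
    ConnOrder G L := by
  refine ⟨hnd, hmem, ?_⟩
  rintro ⟨t, htL⟩ (ht : 0 < t)
  have hsplit : L = L.take t ++ L[t] :: L.drop (t + 1) := by
    rw [List.getElem_cons_drop, List.take_append_drop]
  obtain ⟨f, hf, hsh⟩ := hconn _ _ _ hsplit (List.ne_nil_of_length_pos (by simp; omega))
  obtain ⟨q, hq, rfl⟩ := List.mem_take_iff_getElem.mp hf
  exact ⟨⟨q, by omega⟩, by simp only at hq ⊢; omega, hsh⟩

lemma mem_left_of_pairwise_key_lt {α β : Type*} [Preorder β] {key : α → β} {l₁ l₂ : List α}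
    {e f : α} (hs : (l₁ ++ e :: l₂).Pairwise fun a b => key a ≤ key b)
    (hf : f ∈ l₁ ++ e :: l₂) (hlt : key f < key e) : f ∈ l₁ := by
  rw [List.pairwise_append, List.pairwise_cons] at hs
  rcases List.mem_append.mp hf with hf | hf
  · exact hf
  rcases List.mem_cons.mp hf with rfl | hf
  · exact absurd hlt (lt_irrefl _)
  · exact absurd hlt (hs.2.1.1 f hf).not_gt

section KeyOrder

variable (r : V → ℕ) (c : Sym2 V → ℕ)

def lowRank (e : Sym2 V) : ℕ := (e.map r).inf

lemma lowRank_le {e : Sym2 V} {u : V} (hu : u ∈ e) : lowRank r e ≤ r u := by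
  induction e using Sym2.ind with
  | _ a b => rcases Sym2.mem_iff.mp hu with rfl | rfl <;> simp [lowRank]

lemma exists_mem_lowRank_eq (e : Sym2 V) : ∃ u ∈ e, r u = lowRank r e := by
  induction e using Sym2.ind with
  | _ a b =>
    rcases le_total (r a) (r b) with h | h
    · exact ⟨a, Sym2.mem_mk_left a b, by simp [lowRank, h]⟩
    · exact ⟨b, Sym2.mem_mk_right a b, by simp [lowRank, h]⟩

def edgeKey (e : Sym2 V) : ℕ ×ₗ ℕ := toLex (lowRank r e, c e)

variable [Fintype V] (G : SimpleGraph V) (e₀ : Sym2 V)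

noncomputable def keyOrder : List (Sym2 V) :=
  e₀ :: (G.edgeFinset.erase e₀).toList.mergeSort fun e f => decide (edgeKey r c e ≤ edgeKey r c f)

lemma keyOrder_nodup : (keyOrder r c G e₀).Nodup := by
  refine List.nodup_cons.mpr ⟨?_, (List.mergeSort_perm _ _).nodup_iff.mpr (Finset.nodup_toList _)⟩
  simp [List.mem_mergeSort]

lemma mem_keyOrder (he₀ : e₀ ∈ G.edgeSet) {e : Sym2 V} :
    e ∈ keyOrder r c G e₀ ↔ e ∈ G.edgeSet := by
  by_cases h : e = e₀
  · subst h; simp [keyOrder, he₀]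
  · simp [keyOrder, List.mem_mergeSort, h]

lemma keyOrder_tail_pairwise :
    (keyOrder r c G e₀).tail.Pairwise fun e f => edgeKey r c e ≤ edgeKey r c f :=
  (List.pairwise_mergeSort
    (fun _ _ _ hab hbc => by simpa using le_trans (by simpa using hab) (by simpa using hbc))
    (fun _ _ => by simpa using le_total _ _) _).imp (by simp)

variable {r c G e₀}

lemma mem_cons_of_edgeKey_lt {l₁ l₂ : List (Sym2 V)} {e f : Sym2 V}
    (hsplit : (keyOrder r c G e₀).tail = l₁ ++ e :: l₂) (hf : f ∈ G.edgeSet)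
    (hlt : edgeKey r c f < edgeKey r c e) : f ∈ e₀ :: l₁ := by
  by_cases hf₀ : f = e₀
  · exact hf₀ ▸ List.mem_cons_self
  have hfT : f ∈ l₁ ++ e :: l₂ := by
    rw [← hsplit]; simp [keyOrder, List.mem_mergeSort, hf₀, hf]
  exact List.mem_cons_of_mem _
    (mem_left_of_pairwise_key_lt (hsplit ▸ keyOrder_tail_pairwise r c G e₀) hfT hlt)

theorem connOrder_keyOrder (he₀ : e₀ ∈ G.edgeSet)
    (hdesc : ∀ v, v ∉ e₀ → ∃ w, G.Adj v w ∧ r w < r v) : ConnOrder G (keyOrder r c G e₀) := by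
  refine connOrder_of_forall_append_cons (keyOrder_nodup r c G e₀)
    (fun _ => mem_keyOrder r c G e₀ he₀) ?_
  rintro (_ | ⟨g, l₁⟩) e l₂ hsplit hne
  · exact absurd rfl hne
  obtain ⟨rfl, -⟩ := List.cons_eq_cons.mp hsplit
  have htail : (keyOrder r c G e₀).tail = l₁ ++ e :: l₂ := by rw [hsplit]; rfl
  obtain ⟨u, hue, hu⟩ := exists_mem_lowRank_eq r e
  by_cases hu₀ : u ∈ e₀
  · exact ⟨e₀, List.mem_cons_self, u, hue, hu₀⟩
  obtain ⟨w, hadj, hw⟩ := hdesc u hu₀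
  refine ⟨s(u, w), mem_cons_of_edgeKey_lt htail hadj (Prod.Lex.toLex_lt_toLex.mpr (Or.inl ?_)),
    u, hue, Sym2.mem_mk_left u w⟩
  calc lowRank r s(u, w) ≤ r w := lowRank_le r (Sym2.mem_mk_right u w)
    _ < r u := hw
    _ = lowRank r e := hu

theorem greedyExtend_keyOrder {k : ℕ} (he₀ : e₀ ∈ G.edgeSet) (hc : IsProperEdgeCol G c k)
    (hsat : ∀ e ∈ G.edgeSet, ∀ u ∈ e, r u = lowRank r e →
      ∀ j, 1 ≤ j → j < c e → ∃ f ∈ G.edgeSet, u ∈ f ∧ c f = j) :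
    greedyExtend (colourOn c [e₀]) (keyOrder r c G e₀).tail = colourOn c (keyOrder r c G e₀) := by
  refine greedyExtend_colourOn [e₀] _ fun l₁ e l₂ hsplit => ?_
  have hL : keyOrder r c G e₀ = ([e₀] ++ l₁) ++ e :: l₂ := by
    rw [List.append_assoc, List.singleton_append, ← hsplit]; rfl
  have hmem (f) (hf : f ∈ [e₀] ++ l₁ ++ e :: l₂) : f ∈ G.edgeSet :=
    (mem_keyOrder r c G e₀ he₀).mp (hL ▸ hf)
  have he : e ∈ G.edgeSet := hmem e (by simp)
  have hfresh : e ∉ [e₀] ++ l₁ := fun h =>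
    (List.nodup_append.mp (hL ▸ keyOrder_nodup r c G e₀)).2.2 e h e List.mem_cons_self rfl
  refine ⟨⟨(hc.1 e he).1, fun f hf hsh => hc.2 f (hmem f (List.mem_append_left _ hf)) e he
    (by rintro rfl; exact hfresh hf) hsh.symm⟩, ?_⟩
  rintro j ⟨hj, hfree⟩
  by_contra! hlt
  obtain ⟨u, hue, hu⟩ := exists_mem_lowRank_eq r e
  obtain ⟨f, hf, huf, rfl⟩ := hsat e he u hue hu j hj hlt
  have hkey : edgeKey r c f < edgeKey r c e := by
    refine Prod.Lex.toLex_lt_toLex.mpr ?_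
    rcases (lowRank_le r huf).trans_eq hu |>.lt_or_eq with h | h
    · exact Or.inl h
    · exact Or.inr ⟨h, hlt⟩
  exact hfree f (by simpa using mem_cons_of_edgeKey_lt hsplit hf hkey) ⟨u, hue, huf⟩ rfl

end KeyOrder

section Hypercube

variable {Δ : ℕ}

def flipAt (v : Fin Δ → Bool) (j : Fin Δ) : Fin Δ → Bool := Function.update v j (!v j)

variable {u v x : Fin Δ → Bool} {j k l : Fin Δ}

@[simp] lemma flipAt_apply_self : flipAt v j j = !v j := Function.update_self ..

lemma flipAt_apply_of_ne (h : l ≠ j) : flipAt v j l = v l := Function.update_of_ne h ..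

@[simp] lemma flipAt_flipAt : flipAt (flipAt v j) j = v := by
  funext l
  by_cases h : l = j
  · subst h; simp
  · rw [flipAt_apply_of_ne h, flipAt_apply_of_ne h]

lemma flipAt_ne_self : flipAt v j ≠ v := fun h => by simpa using congrFun h j

lemma flipAt_injective : Function.Injective (flipAt v) := by
  intro j k h
  by_contra hne
  simpa [flipAt_apply_of_ne hne] using congrFun h j

lemma eq_flipAt_of_forall_ne (hj : u j ≠ v j) (ho : ∀ l, l ≠ j → u l = v l) : v = flipAt u j := by
  funext l
  by_cases h : l = j
  · subst h; cases hu : u l <;> cases hv : v l <;> simp_all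
  · rw [flipAt_apply_of_ne h, ho l h]

lemma hypercube_adj_iff : (hypercube Δ).Adj u v ↔ ∃ j, v = flipAt u j := by
  rw [hypercube, SimpleGraph.fromRel_adj]
  constructor
  · rintro ⟨-, ⟨j, hj, ho⟩ | ⟨j, hj, ho⟩⟩
    · exact ⟨j, eq_flipAt_of_forall_ne hj ho⟩
    · exact ⟨j, eq_flipAt_of_forall_ne (Ne.symm hj) fun l hl => (ho l hl).symm⟩
  · rintro ⟨j, rfl⟩
    exact ⟨flipAt_ne_self.symm, Or.inl ⟨j, by simp, fun l hl => (flipAt_apply_of_ne hl).symm⟩⟩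

lemma eq_of_sym2_flipAt_eq (h : s(u, flipAt u j) = s(v, flipAt v k)) : j = k := by
  rcases Sym2.eq_iff.mp h with ⟨rfl, h⟩ | ⟨rfl, h⟩
  · exact flipAt_injective h
  · exact flipAt_injective (h.trans flipAt_flipAt.symm)

lemma hammingDist_flipAt_add_one (h : u j ≠ x j) :
    hammingDist (flipAt u j) x + 1 = hammingDist u x := by
  have hset : ({l | flipAt u j l ≠ x l} : Finset (Fin Δ)) =
      ({l | u l ≠ x l} : Finset _).erase j := by
    ext l
    by_cases hl : l = j
    · subst hl; cases hu : u l <;> cases hx : x l <;> simp_all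
    · simp [hl, flipAt_apply_of_ne hl]
  rw [hammingDist, hammingDist, hset, Finset.card_erase_add_one (by simpa using h)]

lemma hammingDist_flipAt_flipAt (h : j ≠ k) : hammingDist (flipAt (flipAt x j) k) x = 2 := by
  have h₁ := hammingDist_flipAt_add_one (u := flipAt x j) (x := x) (j := j) (by simp)
  have h₂ := hammingDist_flipAt_add_one (u := flipAt (flipAt x j) k) (x := x) (j := k)
    (by simp [flipAt_apply_of_ne h.symm])
  rw [flipAt_flipAt, hammingDist_self] at h₁
  rw [flipAt_flipAt] at h₂
  omega

lemma exists_apply_ne_and_flipAt_ne (hx : u ≠ x) (hy : u ≠ flipAt x j) :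
    ∃ l, u l ≠ x l ∧ flipAt u l ≠ flipAt x j := by
  by_cases hj : u j = x j
  · obtain ⟨l, hl⟩ := Function.ne_iff.mp hx
    have hlj : l ≠ j := by rintro rfl; exact hl hj
    refine ⟨l, hl, fun h => ?_⟩
    simpa [flipAt_apply_of_ne hlj.symm, hj] using congrFun h j
  · exact ⟨j, hj, fun h => hx (by simpa using congrArg (flipAt · j) h)⟩

end Hypercube

section PlusGraph

variable {W : Type*} (G : SimpleGraph W) (x y : W) {u w : W}

lemma plusGraph_adj_inl_inl :
    (plusGraph G x y).Adj (.inl u) (.inl w) ↔ G.Adj u w ∧ s(u, w) ≠ s(x, y) := by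
  simp only [plusGraph, SimpleGraph.fromRel_adj, ne_eq, Sum.inl.injEq, reduceCtorEq, and_false,
    or_false, exists_and_left, exists_eq_left']
  constructor
  · rintro ⟨-, h | h⟩
    · exact h
    · exact ⟨h.1.symm, by rw [Sym2.eq_swap]; exact h.2⟩
  · rintro h
    exact ⟨h.1.ne, Or.inl h⟩

lemma plusGraph_adj_inl_inr {b : Bool} :
    (plusGraph G x y).Adj (.inl u) (.inr b) ↔ u = cond b x y := by
  cases b <;> simp [plusGraph, SimpleGraph.fromRel_adj, eq_comm]

lemma not_plusGraph_adj_inr_inr {a b : Bool} : ¬ (plusGraph G x y).Adj (.inr a) (.inr b) := by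
  simp [plusGraph, SimpleGraph.fromRel_adj]

end PlusGraph

section PlusCube

variable {Δ : ℕ} (x : Fin Δ → Bool) (d0 : Fin Δ)

abbrev plusCube : SimpleGraph ((Fin Δ → Bool) ⊕ Bool) := plusGraph (hypercube Δ) x (flipAt x d0)

-- In direction `d0`, `x` and `y = flipAt x d0` reach their pendant vertices `x' = inr true` and
-- `y' = inr false` instead of each other.
def edgeAt (v : Fin Δ → Bool) (j : Fin Δ) : Sym2 ((Fin Δ → Bool) ⊕ Bool) :=
  if s(v, flipAt v j) = s(x, flipAt x d0) then s(.inl v, .inr (decide (v = x)))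
  else s(.inl v, .inl (flipAt v j))

variable {x d0}

lemma inl_mem_edgeAt (v : Fin Δ → Bool) (j : Fin Δ) : .inl v ∈ edgeAt x d0 v j := by
  unfold edgeAt
  split_ifs <;> exact Sym2.mem_mk_left _ _

lemma edgeAt_mem_edgeSet (v : Fin Δ → Bool) (j : Fin Δ) :
    edgeAt x d0 v j ∈ (plusCube x d0).edgeSet := by
  unfold edgeAt
  split_ifs with h
  · have hv : v = x ∨ v = flipAt x d0 := by
      simpa using (h ▸ Sym2.mem_mk_left v (flipAt v j) : v ∈ s(x, flipAt x d0))
    rw [SimpleGraph.mem_edgeSet, plusGraph_adj_inl_inr]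
    by_cases hvx : v = x <;> simp_all
  · rw [SimpleGraph.mem_edgeSet, plusGraph_adj_inl_inl, hypercube_adj_iff]
    exact ⟨⟨j, rfl⟩, h⟩

lemma exists_edgeAt_eq {e : Sym2 ((Fin Δ → Bool) ⊕ Bool)} {v : Fin Δ → Bool}
    (he : e ∈ (plusCube x d0).edgeSet) (hv : .inl v ∈ e) : ∃ j, e = edgeAt x d0 v j := by
  obtain ⟨w, rfl⟩ := Sym2.mem_iff_exists.mp hv
  rw [SimpleGraph.mem_edgeSet] at he
  rcases w with w | b
  · obtain ⟨hadj, hne⟩ := (plusGraph_adj_inl_inl ..).mp he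
    obtain ⟨j, rfl⟩ := hypercube_adj_iff.mp hadj
    exact ⟨j, by rw [edgeAt, if_neg hne]⟩
  · refine ⟨d0, ?_⟩
    have hv := (plusGraph_adj_inl_inr ..).mp he
    cases b <;> simp only [cond_false, cond_true] at hv <;> subst hv
    · rw [edgeAt, if_pos (by rw [flipAt_flipAt, Sym2.eq_swap])]
      simp [flipAt_ne_self]
    · rw [edgeAt, if_pos rfl]
      simp

lemma eq_of_inr_mem {e : Sym2 ((Fin Δ → Bool) ⊕ Bool)} {b : Bool}
    (he : e ∈ (plusCube x d0).edgeSet) (hb : .inr b ∈ e) :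
    e = s(.inl (cond b x (flipAt x d0)), .inr b) := by
  obtain ⟨w, rfl⟩ := Sym2.mem_iff_exists.mp hb
  rw [SimpleGraph.mem_edgeSet] at he
  rcases w with w | a
  · rw [(plusGraph_adj_inl_inr ..).mp he.symm, Sym2.eq_swap]
  · exact absurd he (not_plusGraph_adj_inr_inr _ _ _)

lemma exists_inl_mem {e : Sym2 ((Fin Δ → Bool) ⊕ Bool)} (he : e ∈ (plusCube x d0).edgeSet) :
    ∃ v, .inl v ∈ e := by
  induction e using Sym2.ind with
  | _ a b =>
    rcases a with v | a
    · exact ⟨v, Sym2.mem_mk_left _ _⟩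
    · rw [eq_of_inr_mem he (Sym2.mem_mk_left _ _)]
      exact ⟨_, Sym2.mem_mk_left _ _⟩

variable (d0) (σ : Equiv.Perm (Fin Δ))

-- On a cube edge exactly one coordinate differs, so the sum is `σ j + 1` for its direction `j`.
def plusColourPair : (Fin Δ → Bool) ⊕ Bool → (Fin Δ → Bool) ⊕ Bool → ℕ
  | .inl u, .inl w => ∑ j, if u j ≠ w j then (σ j : ℕ) + 1 else 0
  | .inl _, .inr _ | .inr _, .inl _ => σ d0 + 1
  | .inr _, .inr _ => 0

noncomputable def plusColouring : Sym2 ((Fin Δ → Bool) ⊕ Bool) → ℕ :=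
  Sym2.lift ⟨plusColourPair d0 σ, by rintro (u | a) (w | b) <;> simp [plusColourPair, ne_comm]⟩

@[simp] lemma plusColouring_inl_inr (v : Fin Δ → Bool) (b : Bool) :
    plusColouring d0 σ s(.inl v, .inr b) = σ d0 + 1 := rfl

variable {d0}

lemma plusColouring_edgeAt (v : Fin Δ → Bool) (j : Fin Δ) :
    plusColouring d0 σ (edgeAt x d0 v j) = σ j + 1 := by
  unfold edgeAt
  split_ifs with h
  · rw [plusColouring_inl_inr, eq_of_sym2_flipAt_eq h]
  · have hdir : ∀ l, v l ≠ flipAt v j l ↔ l = j := fun l => by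
      by_cases hl : l = j
      · subst hl; simp
      · simp [hl, flipAt_apply_of_ne hl]
    simp only [plusColouring, Sym2.lift_mk, plusColourPair, hdir, Finset.sum_ite_eq',
      Finset.mem_univ, if_true]

lemma isProperEdgeCol_plusColouring :
    IsProperEdgeCol (plusCube x d0) (plusColouring d0 σ) Δ := by
  refine ⟨fun e he => ?_, fun e he f hf hne ⟨z, hze, hzf⟩ => ?_⟩
  · obtain ⟨v, hv⟩ := exists_inl_mem he
    obtain ⟨j, rfl⟩ := exists_edgeAt_eq he hv
    have := (σ j).isLt
    rw [plusColouring_edgeAt]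
    omega
  · rcases z with v | b
    · obtain ⟨j, rfl⟩ := exists_edgeAt_eq he hze
      obtain ⟨k, rfl⟩ := exists_edgeAt_eq hf hzf
      rw [plusColouring_edgeAt, plusColouring_edgeAt]
      intro hjk
      rw [σ.injective (Fin.ext (by omega) : σ j = σ k)] at hne
      exact hne rfl
    · exact absurd ((eq_of_inr_mem he hze).trans (eq_of_inr_mem hf hzf).symm) hne

variable (x d0)

-- `y`'s only neighbour closer to `x` is `x` itself, across the deleted edge, so `y` is ranked
-- behind its neighbours at distance two.
def plusRank : (Fin Δ → Bool) ⊕ Bool → ℕ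
  | .inl u => if u = flipAt x d0 then 3 else hammingDist u x
  | .inr _ => 4

lemma exists_adj_plusRank_lt (hΔ : 2 ≤ Δ) (v : (Fin Δ → Bool) ⊕ Bool)
    (hv : v ∉ s(.inl x, .inr true)) :
    ∃ w, (plusCube x d0).Adj v w ∧ plusRank x d0 w < plusRank x d0 v := by
  rcases v with u | b
  · by_cases hux : u = x
    · exact absurd (hux ▸ Sym2.mem_mk_left _ _) hv
    by_cases huy : u = flipAt x d0
    · subst huy
      have : Nontrivial (Fin Δ) := Fin.nontrivial_iff_two_le.mpr hΔ
      obtain ⟨j₁, hj₁⟩ := exists_ne d0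
      refine ⟨.inl (flipAt (flipAt x d0) j₁), ?_, ?_⟩
      · rw [plusGraph_adj_inl_inl, hypercube_adj_iff]
        exact ⟨⟨j₁, rfl⟩, fun h => hj₁ (eq_of_sym2_flipAt_eq h)⟩
      · simp [plusRank, flipAt_ne_self, hammingDist_flipAt_flipAt hj₁.symm]
    obtain ⟨l, hl, hly⟩ := exists_apply_ne_and_flipAt_ne hux huy
    refine ⟨.inl (flipAt u l), ?_, ?_⟩
    · rw [plusGraph_adj_inl_inl, hypercube_adj_iff]
      refine ⟨⟨l, rfl⟩, fun h => ?_⟩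
      have : u = x ∨ u = flipAt x d0 := by
        simpa using (h ▸ Sym2.mem_mk_left u (flipAt u l) : u ∈ s(x, flipAt x d0))
      tauto
    · have := hammingDist_flipAt_add_one hl
      simp only [plusRank, if_neg huy, if_neg hly]
      omega
  · cases b
    · exact ⟨.inl (flipAt x d0), ((plusGraph_adj_inl_inr ..).mpr rfl).symm, by simp [plusRank]⟩
    · exact absurd (Sym2.mem_mk_right _ _) hv

variable {x d0}

lemma lowRank_lt_plusRank_inr {e : Sym2 ((Fin Δ → Bool) ⊕ Bool)} {b : Bool}
    (he : e ∈ (plusCube x d0).edgeSet) (hb : .inr b ∈ e) :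
    lowRank (plusRank x d0) e < plusRank x d0 (.inr b) := by
  rw [eq_of_inr_mem he hb]
  refine (lowRank_le _ (Sym2.mem_mk_left _ _)).trans_lt ?_
  cases b <;> simp only [plusRank, cond_true, cond_false] <;> split_ifs <;>
    simp [hammingDist_self]

lemma exists_plusColouring_eq_of_lowRank (e : Sym2 ((Fin Δ → Bool) ⊕ Bool))
    (he : e ∈ (plusCube x d0).edgeSet) (u : (Fin Δ → Bool) ⊕ Bool) (hu : u ∈ e)
    (hlow : plusRank x d0 u = lowRank (plusRank x d0) e) (j : ℕ) (hj : 1 ≤ j)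
    (hjc : j < plusColouring d0 σ e) :
    ∃ f ∈ (plusCube x d0).edgeSet, u ∈ f ∧ plusColouring d0 σ f = j := by
  rcases u with v | b
  · have hcΔ := ((isProperEdgeCol_plusColouring σ).1 e he).2
    refine ⟨edgeAt x d0 v (σ.symm ⟨j - 1, by omega⟩), edgeAt_mem_edgeSet _ _,
      inl_mem_edgeAt _ _, ?_⟩
    rw [plusColouring_edgeAt, Equiv.apply_symm_apply]
    simp only
    omega
  · exact absurd hlow (lowRank_lt_plusRank_inr he hu).ne'

end PlusCube

end GreedyEdge

open GreedyEdge in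
/-- For `Δ ≥ 3` and any colour `i ∈ {1,…,Δ}`, there is a connected ordering of
the edges of `Q_Δ⁺` starting with the pendant edge `xx'` such that precolouring
`xx'` with `i` and greedily colouring the remaining edges in order yields a
proper edge colouring with colours in `{1,…,Δ}`. -/
theorem plus_hypercube_greedy_from_precoloured_edge (Δ : ℕ) (hΔ : 3 ≤ Δ)
    (x y : Fin Δ → Bool) (hxy : (hypercube Δ).Adj x y)
    (i : ℕ) (hi : 1 ≤ i) (hiΔ : i ≤ Δ) :
    ∃ L : List (Sym2 ((Fin Δ → Bool) ⊕ Bool)),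
      ConnOrder (plusGraph (hypercube Δ) x y) L ∧
      L.head? = some s(Sum.inl x, Sum.inr true) ∧
      IsProperEdgeCol (plusGraph (hypercube Δ) x y)
        (greedyExtend
          (Function.update (fun _ => 0) s(Sum.inl x, Sum.inr true) i) L.tail)
        Δ := by
  obtain ⟨d0, rfl⟩ := hypercube_adj_iff.mp hxy
  obtain ⟨σ, hσ⟩ : ∃ σ : Equiv.Perm (Fin Δ), (σ d0 : ℕ) + 1 = i :=
    ⟨Equiv.swap d0 ⟨i - 1, by omega⟩, by simp; omega⟩
  have he₀ : s(.inl x, .inr true) ∈ (plusCube x d0).edgeSet := (plusGraph_adj_inl_inr ..).mpr rfl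
  have hcol := isProperEdgeCol_plusColouring (x := x) (d0 := d0) σ
  refine ⟨keyOrder (plusRank x d0) (plusColouring d0 σ) (plusCube x d0) s(.inl x, .inr true),
    connOrder_keyOrder he₀ (exists_adj_plusRank_lt x d0 (by omega)), rfl, ?_⟩
  rw [← hσ, ← plusColouring_inl_inr d0 σ x true, ← colourOn_singleton,
    greedyExtend_keyOrder he₀ hcol (exists_plusColouring_eq_of_lowRank σ)]
  exact hcol.congr fun e he => colourOn_of_mem _ ((mem_keyOrder _ _ _ _ he₀).mpr he)
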